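/- Let φ be an Orlicz function such that ∑_{n=n₁}^∞ φ(1/n) < ∞ for some n₁ ∈ ℕ. If φ satisfies the Δ₂-condition at zero, then A_φ = ces_φ, i.e. every x ∈ ces_φ satisfies: for all k > 0 there exists n_k ∈ ℕ with ∑_{n=n_k}^∞ φ((k/n)·∑_{i=1}^{n} |x(i)|) < ∞. -/

import Mathlib

open scoped ENNReal
open Filter

/-- An Orlicz function: `φ : ℝ → [0,∞]` even, convex, left continuous on `ℝ₊`,
continuous at zero, with `φ 0 = 0` and `φ u → ∞` as `u → ∞`. -/
structure OrliczFunction where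
  toFun : ℝ → ℝ≥0∞
  even' : ∀ u : ℝ, toFun (-u) = toFun u
  convex' : ∀ u v t : ℝ, 0 ≤ t → t ≤ 1 →
    toFun (t * u + (1 - t) * v) ≤ ENNReal.ofReal t * toFun u + ENNReal.ofReal (1 - t) * toFun v
  map_zero' : toFun 0 = 0
  leftContinuous' : ∀ t : ℝ, 0 < t → Tendsto toFun (nhdsWithin t (Set.Iio t)) (nhds (toFun t))
  continuousAtZero' : Tendsto toFun (nhds 0) (nhds 0)
  tendsto_top' : Tendsto toFun atTop (nhds ⊤)

/-- The Cesàro mean `σx(n) = (1/n) ∑_{j=1}^n |x j|` (with `0`-based indexing). -/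
noncomputable def cesaroMean (x : ℕ → ℝ) (n : ℕ) : ℝ :=
  (∑ j ∈ Finset.range (n + 1), |x j|) / (n + 1)

/-- The modular `ρ_φ(x) = ∑_i φ(σx(i))`. -/
noncomputable def rho (φ : OrliczFunction) (x : ℕ → ℝ) : ℝ≥0∞ :=
  ∑' n : ℕ, φ.toFun (cesaroMean x n)

/-- The Cesàro–Orlicz sequence space `ces_φ`. -/
def cesOrlicz (φ : OrliczFunction) : Set (ℕ → ℝ) :=
  {x | ∃ lam : ℝ, 0 < lam ∧ rho φ (fun i => lam * x i) < ⊤}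

/-- The Luxemburg norm `‖x‖_φ = inf {λ > 0 : ρ_φ(x/λ) ≤ 1}`. -/
noncomputable def luxNorm (φ : OrliczFunction) (x : ℕ → ℝ) : ℝ :=
  sInf {lam : ℝ | 0 < lam ∧ rho φ (fun i => x i / lam) ≤ 1}

/-- The subspace `A_φ` of `ces_φ`. -/
def Aphi (φ : OrliczFunction) : Set (ℕ → ℝ) :=
  {x | x ∈ cesOrlicz φ ∧ ∀ k : ℝ, 0 < k → ∃ nk : ℕ,
    ∑' n : ℕ, φ.toFun ((k / ((nk + n + 1 : ℕ) : ℝ)) * ∑ i ∈ Finset.range (nk + n + 1), |x i|) < ⊤}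

/-- `∃ n₁, ∑_{n=n₁}^∞ φ(1/n) < ∞`. -/
def TailFinite (φ : OrliczFunction) : Prop :=
  ∃ n₁ : ℕ, ∑' n : ℕ, φ.toFun (((n₁ + n + 1 : ℕ) : ℝ)⁻¹) < ⊤

/-- The `Δ₂`-condition at zero. -/
def Delta2Zero (φ : OrliczFunction) : Prop :=
  ∃ K : ℝ, 0 < K ∧ ∃ a : ℝ, 0 < a ∧ 0 < φ.toFun a ∧
    ∀ u : ℝ, 0 ≤ u → u ≤ a → φ.toFun (2 * u) ≤ ENNReal.ofReal K * φ.toFun u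

/-- `φ` takes only finite values. -/
def FiniteValued (φ : OrliczFunction) : Prop := ∀ u : ℝ, φ.toFun u ≠ ⊤


/-!
Since `∑ φ(λ σx(n)) < ∞`, the terms `φ(λ σx(n))` tend to zero. The `Δ₂`-condition forces `φ` to
be positive on `(0, ∞)`, so `λ σx(n)` eventually lies in any prescribed neighbourhood of zero,
and there `m` iterations of `Δ₂` give `φ(k σx(n)) ≤ K ^ m φ(λ σx(n))` once `k ≤ 2 ^ m λ`.
Hence the tails of `∑ φ(k σx(n))` are finite for every `k > 0`.
-/

namespace OrliczFunction

variable (φ : OrliczFunction)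

theorem monotoneOn : MonotoneOn φ.toFun (Set.Ici 0) := by
  intro u hu v hv huv
  rcases (Set.mem_Ici.1 hv).eq_or_lt' with rfl | hv
  · rw [le_antisymm huv hu]
  set t := u / v
  have ht1 : t ≤ 1 := div_le_one_of_le₀ huv hv.le
  have hconv := φ.convex' v 0 t (div_nonneg hu hv.le) ht1
  rw [mul_zero, add_zero, div_mul_cancel₀ _ hv.ne', φ.map_zero', mul_zero, add_zero] at hconv
  calc φ.toFun u ≤ ENNReal.ofReal t * φ.toFun v := hconv
    _ ≤ φ.toFun v := mul_le_of_le_one_left' (ENNReal.ofReal_le_one.mpr ht1)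

variable {φ}

theorem apply_two_pow_mul_le {K a : ℝ}
    (hK : ∀ u : ℝ, 0 ≤ u → u ≤ a → φ.toFun (2 * u) ≤ ENNReal.ofReal K * φ.toFun u)
    (m : ℕ) {u : ℝ} (hu : 0 ≤ u) (hua : 2 ^ m * u ≤ 2 * a) :
    φ.toFun (2 ^ m * u) ≤ ENNReal.ofReal K ^ m * φ.toFun u := by
  induction m with
  | zero => simp
  | succ m ih =>
    have hm : 2 ^ m * u ≤ a := by rw [pow_succ] at hua; linarith
    calc φ.toFun (2 ^ (m + 1) * u) = φ.toFun (2 * (2 ^ m * u)) := by ring_nf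
      _ ≤ ENNReal.ofReal K * φ.toFun (2 ^ m * u) := hK _ (by positivity) hm
      _ ≤ ENNReal.ofReal K * (ENNReal.ofReal K ^ m * φ.toFun u) := by
          gcongr
          exact ih (by nlinarith [pow_pos (two_pos (α := ℝ)) m])
      _ = ENNReal.ofReal K ^ (m + 1) * φ.toFun u := by ring

theorem eventually_lt_of_tsum_ne_top {u : ℕ → ℝ}
    (hsum : ∑' n, φ.toFun (u n) ≠ ⊤) {ε : ℝ} (hε : 0 ≤ ε) (hφε : 0 < φ.toFun ε) :
    ∀ᶠ n in atTop, u n < ε := by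
  filter_upwards [(ENNReal.tendsto_atTop_zero_of_tsum_ne_top hsum).eventually_lt_const hφε]
    with n hn
  by_contra! h
  exact (φ.monotoneOn (Set.mem_Ici.2 hε) (Set.mem_Ici.2 (hε.trans h)) h).not_gt hn

end OrliczFunction

namespace Delta2Zero

variable {φ : OrliczFunction} (hδ : Delta2Zero φ)
include hδ

theorem pos {t : ℝ} (ht : 0 < t) : 0 < φ.toFun t := by
  obtain ⟨K, -, a, ha, hφa, hK⟩ := hδ
  obtain ⟨m, hm⟩ := pow_unbounded_of_one_lt (a / t) one_lt_two
  have h2m : (0 : ℝ) < 2 ^ m := by positivity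
  have hs : a / 2 ^ m ≤ t := by rw [div_le_iff₀ h2m]; rw [div_lt_iff₀ ht] at hm; linarith
  have hcancel : 2 ^ m * (a / 2 ^ m) = a := mul_div_cancel₀ a h2m.ne'
  have hφa_le : φ.toFun a ≤ ENNReal.ofReal K ^ m * φ.toFun t :=
    calc φ.toFun a = φ.toFun (2 ^ m * (a / 2 ^ m)) := by rw [hcancel]
      _ ≤ ENNReal.ofReal K ^ m * φ.toFun (a / 2 ^ m) :=
          OrliczFunction.apply_two_pow_mul_le hK m (by positivity) (by linarith)
      _ ≤ ENNReal.ofReal K ^ m * φ.toFun t := by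
          gcongr
          exact φ.monotoneOn (Set.mem_Ici.2 (by positivity)) (Set.mem_Ici.2 ht.le) hs
  refine pos_iff_ne_zero.2 fun h0 => hφa.ne' ?_
  simpa [h0] using hφa_le

theorem exists_apply_mul_le {k : ℝ} (hk : 0 ≤ k) :
    ∃ C : ℝ≥0∞, C ≠ ⊤ ∧ ∃ ε > 0, ∀ u : ℝ, 0 ≤ u → u ≤ ε →
      φ.toFun (k * u) ≤ C * φ.toFun u := by
  obtain ⟨K, -, a, ha, -, hK⟩ := hδ
  obtain ⟨m, hm⟩ := pow_unbounded_of_one_lt k one_lt_two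
  have h2m : (0 : ℝ) < 2 ^ m := by positivity
  refine ⟨ENNReal.ofReal K ^ m, by simp, 2 * a / 2 ^ m, by positivity, fun u hu huε => ?_⟩
  have hmu : 2 ^ m * u ≤ 2 * a := by rwa [le_div_iff₀ h2m, mul_comm] at huε
  calc φ.toFun (k * u) ≤ φ.toFun (2 ^ m * u) :=
        φ.monotoneOn (Set.mem_Ici.2 (by positivity)) (Set.mem_Ici.2 (by positivity))
          (by nlinarith)
    _ ≤ ENNReal.ofReal K ^ m * φ.toFun u := OrliczFunction.apply_two_pow_mul_le hK m hu hmu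

end Delta2Zero

theorem cesaroMean_nonneg (x : ℕ → ℝ) (n : ℕ) : 0 ≤ cesaroMean x n :=
  div_nonneg (Finset.sum_nonneg fun _ _ => abs_nonneg _) (by positivity)

theorem cesaroMean_const_mul (x : ℕ → ℝ) {c : ℝ} (hc : 0 ≤ c) (n : ℕ) :
    cesaroMean (fun i => c * x i) n = c * cesaroMean x n := by
  simp only [cesaroMean, abs_mul, abs_of_nonneg hc, ← Finset.mul_sum, mul_div_assoc]

theorem div_mul_sum_abs_eq_mul_cesaroMean (x : ℕ → ℝ) (k : ℝ) (n : ℕ) :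
    k / ((n + 1 : ℕ) : ℝ) * ∑ i ∈ Finset.range (n + 1), |x i| = k * cesaroMean x n := by
  rw [cesaroMean, Nat.cast_succ, div_mul_eq_mul_div, mul_div_assoc]

theorem stmt_8_general (φ : OrliczFunction) (hδ : Delta2Zero φ) :
    Aphi φ = cesOrlicz φ := by
  refine Set.Subset.antisymm (fun x hx => hx.1) fun x hx => ⟨hx, fun k hk => ?_⟩
  obtain ⟨lam, hlam, hρ⟩ := hx
  obtain ⟨C, hC, ε, hε, hkε⟩ := hδ.exists_apply_mul_le (div_pos hk hlam).le
  have hρ' : ∑' n, φ.toFun (lam * cesaroMean x n) ≠ ⊤ := by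
    simpa only [rho, cesaroMean_const_mul x hlam.le] using hρ.ne
  obtain ⟨N, hN⟩ := eventually_atTop.1
    (φ.eventually_lt_of_tsum_ne_top hρ' hε.le (hδ.pos hε))
  refine ⟨N, ?_⟩
  have hbound : ∀ n, φ.toFun (k * cesaroMean x (N + n)) ≤
      C * φ.toFun (lam * cesaroMean x (N + n)) := fun n => by
    have h := hkε _ (mul_nonneg hlam.le (cesaroMean_nonneg x (N + n)))
      (hN _ (Nat.le_add_right N n)).le
    rwa [← mul_assoc, div_mul_cancel₀ _ hlam.ne'] at h
  calc ∑' n, φ.toFun (k / ((N + n + 1 : ℕ) : ℝ) * ∑ i ∈ Finset.range (N + n + 1), |x i|)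
      = ∑' n, φ.toFun (k * cesaroMean x (N + n)) := by
        simp only [div_mul_sum_abs_eq_mul_cesaroMean]
    _ ≤ C * ∑' n, φ.toFun (lam * cesaroMean x (N + n)) := by
        rw [← ENNReal.tsum_mul_left]; exact ENNReal.tsum_le_tsum hbound
    _ ≤ C * ∑' n, φ.toFun (lam * cesaroMean x n) :=
        mul_le_mul_right
          (ENNReal.tsum_comp_le_tsum_of_injective (add_right_injective N) _) _
    _ < ⊤ := ENNReal.mul_lt_top hC.lt_top hρ'.lt_top

/-- if `φ ∈ Δ₂(0)` then `A_φ = ces_φ`. -/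
theorem stmt_8 (φ : OrliczFunction) (htail : TailFinite φ) (hδ : Delta2Zero φ) :
    Aphi φ = cesOrlicz φ :=
  stmt_8_general φ hδ
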